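/- arXiv:1706.09703 — 4 statements merged into one kernel-verified Lean document; each statement's English description precedes it below -/
import Mathlib

section
/- Let n be a positive integer, let E = EuclideanSpace ℝ (Fin n), let f : E → E be continuous, and let V : E → ℝ be continuously differentiable with V(0) = 0. Let β > 0 and set Ω = {y ∈ E | V(y) ≤ β}. Assume that for every y ∈ Ω with y ≠ 0 the derivative of V along the vector field is strictly negative, i.e. (fderiv ℝ V y)(f y) < 0. If x : ℝ → E satisfies HasDerivAt x (f (x t)) t for all t ≥ 0 and V(x 0) ≤ β, then V(x t) ≤ β for all t ≥ 0; that is, the sublevel set Ω is positively invariant for the dynamics ẋ = f(x). -/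
/-!
Along a trajectory, `g t = V (x t)` is differentiable with `g' t = V'(x t) (f (x t))`.
Whenever `g t = β > 0 = V 0`, the point `x t` is not the equilibrium, so `g' t < 0`:
`g` can never cross the level `β` upwards, which is the fencing argument
`image_le_of_deriv_right_lt_deriv_boundary` against the constant barrier `β`.
-/

theorem le_of_deriv_neg_of_eq {g g' : ℝ → ℝ} {a β : ℝ}
    (hg : ∀ t, a ≤ t → HasDerivAt g (g' t) t) (ha : g a ≤ β)
    (hlevel : ∀ t, a ≤ t → g t = β → g' t < 0) :
    ∀ t, a ≤ t → g t ≤ β := by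
  intro t ht
  exact image_le_of_deriv_right_lt_deriv_boundary (B := fun _ => β) (B' := fun _ => 0)
    (fun s hs => (hg s hs.1).continuousAt.continuousWithinAt)
    (fun s hs => (hg s hs.1).hasDerivWithinAt) ha (fun _ => hasDerivAt_const _ β)
    (fun s hs => hlevel s hs.1) ⟨ht, le_rfl⟩

theorem sublevel_set_positively_invariant_general
    (n : ℕ)
    (f : EuclideanSpace ℝ (Fin n) → EuclideanSpace ℝ (Fin n))
    (V : EuclideanSpace ℝ (Fin n) → ℝ) (hV : ContDiff ℝ 1 V)
    (hV0 : V (0 : EuclideanSpace ℝ (Fin n)) = 0)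
    (β : ℝ) (hβ : 0 < β)
    (hdec : ∀ y : EuclideanSpace ℝ (Fin n), V y ≤ β → y ≠ 0 → fderiv ℝ V y (f y) < 0)
    (x : ℝ → EuclideanSpace ℝ (Fin n))
    (hx : ∀ t : ℝ, 0 ≤ t → HasDerivAt x (f (x t)) t)
    (hx0 : V (x 0) ≤ β) :
    ∀ t : ℝ, 0 ≤ t → V (x t) ≤ β := by
  have hVx : ∀ t, 0 ≤ t → HasDerivAt (V ∘ x) (fderiv ℝ V (x t) (f (x t))) t := fun t ht =>
    ((hV.differentiable one_ne_zero).differentiableAt.hasFDerivAt).comp_hasDerivAt t (hx t ht)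
  refine le_of_deriv_neg_of_eq hVx hx0 fun t _ hlevel => hdec _ hlevel.le ?_
  rintro hzero
  rw [hzero, hV0] at hlevel
  exact hβ.ne hlevel

/-- Positive invariance of a sublevel set of a Lyapunov function:
if `V` strictly decreases along the vector field `f` on the sublevel set
`Ω = {y | V y ≤ β}` (away from the equilibrium `0`), then any trajectory of
`ẋ = f x` starting in `Ω` stays in `Ω` for all `t ≥ 0`. -/
theorem sublevel_set_positively_invariant
    (n : ℕ) (hn : 0 < n)
    (f : EuclideanSpace ℝ (Fin n) → EuclideanSpace ℝ (Fin n)) (hf : Continuous f)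
    (V : EuclideanSpace ℝ (Fin n) → ℝ) (hV : ContDiff ℝ 1 V)
    (hV0 : V (0 : EuclideanSpace ℝ (Fin n)) = 0)
    (β : ℝ) (hβ : 0 < β)
    (hdec : ∀ y : EuclideanSpace ℝ (Fin n), V y ≤ β → y ≠ 0 → fderiv ℝ V y (f y) < 0)
    (x : ℝ → EuclideanSpace ℝ (Fin n))
    (hx : ∀ t : ℝ, 0 ≤ t → HasDerivAt x (f (x t)) t)
    (hx0 : V (x 0) ≤ β) :
    ∀ t : ℝ, 0 ≤ t → V (x t) ≤ β :=
  sublevel_set_positively_invariant_general n f V hV hV0 β hβ hdec x hx hx0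
end

section
/- Let n be a positive integer, let E = EuclideanSpace ℝ (Fin n), let f : E → E be continuous with f(0) = 0, and let V : E → ℝ be continuously differentiable with V(0) = 0. Let β > 0 and set Ω = {y ∈ E | V(y) ≤ β}. Assume that for every y ∈ Ω with y ≠ 0 one has (fderiv ℝ V y)(f y) < 0. If x : ℝ → E satisfies HasDerivAt x (f (x t)) t for all t ≥ 0 and V(x 0) ≤ β, then the function t ↦ V(x t) is nonincreasing on [0, ∞): for all 0 ≤ s ≤ t, V(x t) ≤ V(x s). -/
/-!
The sublevel set `{V ≤ β}` is forward invariant: on its boundary `V = β` the trajectory is away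
from the equilibrium (because `V 0 = 0 < β`), so `t ↦ V (x t)` has strictly negative derivative
there and can never cross the level `β` (a barrier argument). Inside the sublevel set the
derivative of `t ↦ V (x t)` is nonpositive, so it is nonincreasing by the mean value theorem.
-/

open Set

theorem le_of_hasDerivAt_of_eq_imp_deriv_neg {g g' : ℝ → ℝ} {a β : ℝ}
    (hg : ∀ t, a ≤ t → HasDerivAt g (g' t) t) (ha : g a ≤ β)
    (hβ : ∀ t, a ≤ t → g t = β → g' t < 0) {t : ℝ} (ht : a ≤ t) : g t ≤ β :=
  image_le_of_deriv_right_lt_deriv_boundary (B := fun _ ↦ β) (B' := 0)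
    (fun s hs ↦ (hg s hs.1).continuousAt.continuousWithinAt)
    (fun s hs ↦ (hg s hs.1).hasDerivWithinAt) ha (fun _ ↦ hasDerivAt_const _ β)
    (fun s hs ↦ hβ s hs.1) ⟨ht, le_rfl⟩

theorem antitoneOn_Ici_of_hasDerivAt_nonpos {g g' : ℝ → ℝ} {a : ℝ}
    (hg : ∀ t, a ≤ t → HasDerivAt g (g' t) t) (hg' : ∀ t, a ≤ t → g' t ≤ 0) :
    AntitoneOn g (Ici a) := by
  refine antitoneOn_of_hasDerivWithinAt_nonpos (convex_Ici a)
    (fun t ht ↦ (hg t ht).continuousAt.continuousWithinAt)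
    (fun t ht ↦ (hg t (le_of_lt ?_)).hasDerivWithinAt) (fun t ht ↦ hg' t (le_of_lt ?_))
  all_goals simpa only [interior_Ici, mem_Ioi] using ht

section Lyapunov

variable {E : Type*} [NormedAddCommGroup E] [NormedSpace ℝ E]
  {f : E → E} {V : E → ℝ} {β : ℝ} {x : ℝ → E}

theorem fderiv_apply_nonpos_of_le (hf0 : f 0 = 0)
    (hdec : ∀ y, V y ≤ β → y ≠ 0 → fderiv ℝ V y (f y) < 0) {y : E} (hy : V y ≤ β) :
    fderiv ℝ V y (f y) ≤ 0 := by
  rcases eq_or_ne y 0 with rfl | hy0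
  · simp [hf0]
  · exact (hdec y hy hy0).le

theorem hasDerivAt_comp_trajectory (hV : Differentiable ℝ V) {t : ℝ}
    (hx : HasDerivAt x (f (x t)) t) :
    HasDerivAt (fun s ↦ V (x s)) (fderiv ℝ V (x t) (f (x t))) t :=
  (hV (x t)).hasFDerivAt.comp_hasDerivAt t hx

theorem le_of_trajectory_of_le (hV : Differentiable ℝ V) (hV0 : V 0 = 0) (hβ : 0 < β)
    (hdec : ∀ y, V y ≤ β → y ≠ 0 → fderiv ℝ V y (f y) < 0)
    (hx : ∀ t, 0 ≤ t → HasDerivAt x (f (x t)) t) (hx0 : V (x 0) ≤ β) {t : ℝ}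
    (ht : 0 ≤ t) :
    V (x t) ≤ β := by
  refine le_of_hasDerivAt_of_eq_imp_deriv_neg (fun s hs ↦ hasDerivAt_comp_trajectory hV (hx s hs))
    hx0 (fun s _ hs ↦ hdec _ hs.le ?_) ht
  intro hxs
  rw [hxs, hV0] at hs
  exact hβ.ne hs

theorem antitoneOn_comp_trajectory (hf0 : f 0 = 0) (hV : Differentiable ℝ V) (hV0 : V 0 = 0)
    (hβ : 0 < β) (hdec : ∀ y, V y ≤ β → y ≠ 0 → fderiv ℝ V y (f y) < 0)
    (hx : ∀ t, 0 ≤ t → HasDerivAt x (f (x t)) t) (hx0 : V (x 0) ≤ β) :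
    AntitoneOn (fun t ↦ V (x t)) (Ici 0) :=
  antitoneOn_Ici_of_hasDerivAt_nonpos (fun t ht ↦ hasDerivAt_comp_trajectory hV (hx t ht))
    fun _ ht ↦ fderiv_apply_nonpos_of_le hf0 hdec
      (le_of_trajectory_of_le hV hV0 hβ hdec hx hx0 ht)

end Lyapunov

theorem lyapunov_nonincreasing_along_trajectories_general
    (n : ℕ)
    (f : EuclideanSpace ℝ (Fin n) → EuclideanSpace ℝ (Fin n))
    (hf0 : f (0 : EuclideanSpace ℝ (Fin n)) = 0)
    (V : EuclideanSpace ℝ (Fin n) → ℝ) (hV : ContDiff ℝ 1 V)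
    (hV0 : V (0 : EuclideanSpace ℝ (Fin n)) = 0)
    (β : ℝ) (hβ : 0 < β)
    (hdec : ∀ y : EuclideanSpace ℝ (Fin n), V y ≤ β → y ≠ 0 → fderiv ℝ V y (f y) < 0)
    (x : ℝ → EuclideanSpace ℝ (Fin n))
    (hx : ∀ t : ℝ, 0 ≤ t → HasDerivAt x (f (x t)) t)
    (hx0 : V (x 0) ≤ β) :
    ∀ s t : ℝ, 0 ≤ s → s ≤ t → V (x t) ≤ V (x s) := fun _ _ hs hst ↦
  antitoneOn_comp_trajectory hf0 (hV.differentiable one_ne_zero) hV0 hβ hdec hx hx0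
    hs (hs.trans hst) hst

/-- Monotone decrease of a Lyapunov function along trajectories:
if `V` strictly decreases along the vector field `f` on the sublevel set
`Ω = {y | V y ≤ β}` away from the equilibrium (where `f 0 = 0`), then along any
trajectory of `ẋ = f x` starting in `Ω`, the map `t ↦ V (x t)` is nonincreasing
on `[0, ∞)`. -/
theorem lyapunov_nonincreasing_along_trajectories
    (n : ℕ) (hn : 0 < n)
    (f : EuclideanSpace ℝ (Fin n) → EuclideanSpace ℝ (Fin n)) (hf : Continuous f)
    (hf0 : f (0 : EuclideanSpace ℝ (Fin n)) = 0)
    (V : EuclideanSpace ℝ (Fin n) → ℝ) (hV : ContDiff ℝ 1 V)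
    (hV0 : V (0 : EuclideanSpace ℝ (Fin n)) = 0)
    (β : ℝ) (hβ : 0 < β)
    (hdec : ∀ y : EuclideanSpace ℝ (Fin n), V y ≤ β → y ≠ 0 → fderiv ℝ V y (f y) < 0)
    (x : ℝ → EuclideanSpace ℝ (Fin n))
    (hx : ∀ t : ℝ, 0 ≤ t → HasDerivAt x (f (x t)) t)
    (hx0 : V (x 0) ≤ β) :
    ∀ s t : ℝ, 0 ≤ s → s ≤ t → V (x t) ≤ V (x s) :=
  lyapunov_nonincreasing_along_trajectories_general n f hf0 V hV hV0 β hβ hdec x hx hx0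
end

section
/- Let n be a positive integer, let E = EuclideanSpace ℝ (Fin n), let f : E → E be continuous with f(0) = 0, and let V : E → ℝ be continuously differentiable with V(0) = 0. Let β > 0 and suppose the sublevel set Ω = {y ∈ E | V(y) ≤ β} is compact, V(y) > 0 for every y ∈ Ω with y ≠ 0, and (fderiv ℝ V y)(f y) < 0 for every y ∈ Ω with y ≠ 0. If x : ℝ → E satisfies HasDerivAt x (f (x t)) t for all t ≥ 0 and V(x 0) ≤ β, then x(t) → 0 as t → ∞ (Tendsto x atTop (nhds 0)). In particular, Ω is contained in the region of attraction of the equilibrium 0. -/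
/-!
Along a trajectory, `t ↦ V (x t)` has derivative `V̇ (x t)`. As `V̇ < 0` on the level set
`{V = β}`, the trajectory never leaves `Ω = {V ≤ β}`, where `V̇ ≤ 0` (at `0` because `0` is a
local minimum of `V`); so `V (x t)` decreases to some `c ≥ 0`. If `c > 0`, then `V̇` is bounded
away from `0` on the compact shell `{c ≤ V ≤ β}` and `V (x t)` would decrease linearly, so
`c = 0`. Since `0` is the only zero of `V` in the compact set `Ω`, this forces `x t → 0`.
-/

open Set Filter Topology

theorem le_of_hasDerivAt_neg_of_eq {g g' : ℝ → ℝ} {a β : ℝ}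
    (hg : ∀ t ∈ Ici a, HasDerivAt g (g' t) t) (ha : g a ≤ β)
    (hlevel : ∀ t ∈ Ici a, g t = β → g' t < 0) : ∀ t ∈ Ici a, g t ≤ β := fun _ ht =>
  image_le_of_deriv_right_lt_deriv_boundary' (B := fun _ => β) (B' := 0)
    (fun s hs => (hg s hs.1).continuousAt.continuousWithinAt)
    (fun s hs => (hg s hs.1).hasDerivWithinAt) ha continuousOn_const
    (fun _ _ => hasDerivWithinAt_const _ _ _) (fun s hs => hlevel s hs.1) ⟨ht, le_rfl⟩

theorem le_sub_mul_of_hasDerivAt_le {g g' : ℝ → ℝ} {a δ : ℝ}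
    (hg : ∀ t ∈ Ici a, HasDerivAt g (g' t) t) (hδ : ∀ t ∈ Ici a, g' t ≤ -δ) :
    ∀ t ∈ Ici a, g t ≤ g a - δ * (t - a) := fun _ ht =>
  image_le_of_deriv_right_le_deriv_boundary (B := fun s => g a - δ * (s - a)) (B' := fun _ => -δ)
    (fun s hs => (hg s hs.1).continuousAt.continuousWithinAt)
    (fun s hs => (hg s hs.1).hasDerivWithinAt) (by simp) (by fun_prop)
    (fun s _ => by simpa using (((hasDerivAt_id s).sub_const a).const_mul δ).const_sub (g a)
      |>.hasDerivWithinAt)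
    (fun s hs => hδ s hs.1) ⟨ht, le_rfl⟩

theorem tendsto_of_antitoneOn_of_exists_lt {g : ℝ → ℝ} {a c : ℝ} (hg : AntitoneOn g (Ici a))
    (hc : ∀ t ∈ Ici a, c ≤ g t) (hlt : ∀ m > c, ∃ T ∈ Ici a, g T < m) :
    Tendsto g atTop (𝓝 c) := by
  refine tendsto_order.2 ⟨fun m hm => eventually_atTop.2 ⟨a, fun t ht => hm.trans_le (hc t ht)⟩,
    fun m hm => ?_⟩
  obtain ⟨T, hT, hgT⟩ := hlt m hm
  exact eventually_atTop.2 ⟨T, fun t ht => (hg hT (le_trans hT ht) ht).trans_lt hgT⟩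

theorem IsCompact.tendsto_of_tendsto_comp {X Y α : Type*} [TopologicalSpace X]
    [TopologicalSpace Y] [T2Space Y] {K : Set X} (hK : IsCompact K) {φ : X → Y}
    (hφ : Continuous φ) {l : Filter α} {u : α → X} (hu : ∀ᶠ s in l, u s ∈ K) {z : X}
    (hz : ∀ y ∈ K, φ y = φ z → y = z) (h : Tendsto (φ ∘ u) l (𝓝 (φ z))) :
    Tendsto u l (𝓝 z) :=
  hK.tendsto_nhds_of_unique_mapClusterPt hu fun y hy hcluster =>
    hz y hy <| eq_of_nhds_neBot <|
      (hcluster.continuousAt_comp hφ.continuousAt).neBot.mono (inf_le_inf_left _ h)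

theorem isLocalMin_of_le_on_sublevel {X : Type*} [TopologicalSpace X] {V : X → ℝ} {y : X}
    {β : ℝ} (hV : ContinuousAt V y) (hy : V y < β) (hmin : ∀ z, V z ≤ β → V y ≤ V z) :
    IsLocalMin V y := by
  filter_upwards [hV.eventually_lt continuousAt_const hy] with z hz using hmin z hz.le

section Lyapunov

variable {E : Type*} [NormedAddCommGroup E] [NormedSpace ℝ E] {V : E → ℝ} {f : E → E}
  {x : ℝ → E} {β : ℝ}

noncomputable def orbitalDerivative (V : E → ℝ) (f : E → E) (y : E) : ℝ :=
  fderiv ℝ V y (f y)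

theorem orbitalDerivative_eq_zero_of_isLocalMin {y : E} (h : IsLocalMin V y) :
    orbitalDerivative V f y = 0 := by
  simp [orbitalDerivative, h.fderiv_eq_zero]

theorem hasDerivAt_comp_orbitalDerivative {t : ℝ} (hV : DifferentiableAt ℝ V (x t))
    (hx : HasDerivAt x (f (x t)) t) : HasDerivAt (V ∘ x) (orbitalDerivative V f (x t)) t :=
  hV.hasFDerivAt.comp_hasDerivAt t hx

theorem comp_le_of_orbitalDerivative_neg_on_level (hV : Differentiable ℝ V)
    (hx : ∀ t ∈ Ici (0 : ℝ), HasDerivAt x (f (x t)) t) (hx0 : V (x 0) ≤ β)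
    (hlevel : ∀ y, V y = β → orbitalDerivative V f y < 0) : ∀ t ∈ Ici (0 : ℝ), V (x t) ≤ β :=
  le_of_hasDerivAt_neg_of_eq (fun t ht => hasDerivAt_comp_orbitalDerivative (hV _) (hx t ht))
    hx0 fun t _ => hlevel (x t)

theorem antitoneOn_comp_of_orbitalDerivative_nonpos (hV : Differentiable ℝ V)
    (hx : ∀ t ∈ Ici (0 : ℝ), HasDerivAt x (f (x t)) t)
    (hnonpos : ∀ t ∈ Ici (0 : ℝ), orbitalDerivative V f (x t) ≤ 0) :
    AntitoneOn (V ∘ x) (Ici 0) :=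
  antitoneOn_of_hasDerivWithinAt_nonpos (convex_Ici 0)
    (fun t ht => (hasDerivAt_comp_orbitalDerivative (hV _) (hx t ht)).continuousAt
      |>.continuousWithinAt)
    (fun t ht => (hasDerivAt_comp_orbitalDerivative (hV _)
      (hx t (interior_subset ht))).hasDerivWithinAt)
    (fun t ht => hnonpos t (interior_subset ht))

theorem exists_comp_lt_of_orbitalDerivative_neg_on_shell (hV : Differentiable ℝ V)
    (hx : ∀ t ∈ Ici (0 : ℝ), HasDerivAt x (f (x t)) t)
    (hW : Continuous (orbitalDerivative V f)) (hΩ : IsCompact {y | V y ≤ β})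
    (hinv : ∀ t ∈ Ici (0 : ℝ), V (x t) ≤ β) {m : ℝ}
    (hshell : ∀ y, V y ≤ β → m ≤ V y → orbitalDerivative V f y < 0) :
    ∃ T ∈ Ici (0 : ℝ), V (x T) < m := by
  by_contra! hge
  have hA : IsCompact ({y | V y ≤ β} ∩ {y | m ≤ V y}) :=
    hΩ.inter_right (isClosed_le continuous_const hV.continuous)
  obtain ⟨z, ⟨hzβ, hzm⟩, hzmax⟩ :=
    hA.exists_isMaxOn ⟨x 0, hinv 0 self_mem_Ici, hge 0 self_mem_Ici⟩ hW.continuousOn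
  set δ := -orbitalDerivative V f z
  have hδ : 0 < δ := neg_pos.2 (hshell z hzβ hzm)
  have hdecay := le_sub_mul_of_hasDerivAt_le (δ := δ)
    (fun t ht => hasDerivAt_comp_orbitalDerivative (hV _) (hx t ht))
    (fun t ht => by simpa [δ] using hzmax ⟨hinv t ht, hge t ht⟩)
  have hT : (V (x 0) - m) / δ + 1 ∈ Ici (0 : ℝ) :=
    add_nonneg (div_nonneg (sub_nonneg.2 (hge 0 self_mem_Ici)) hδ.le) zero_le_one
  have h₁ := hdecay _ hT
  have h₂ := hge _ hT
  simp only [Function.comp_apply, sub_zero, mul_add, mul_div_cancel₀ _ hδ.ne', mul_one] at h₁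
  linarith

end Lyapunov

theorem compact_sublevel_subset_region_of_attraction_general
    (n : ℕ)
    (f : EuclideanSpace ℝ (Fin n) → EuclideanSpace ℝ (Fin n)) (hf : Continuous f)
    (V : EuclideanSpace ℝ (Fin n) → ℝ) (hV : ContDiff ℝ 1 V)
    (hV0 : V (0 : EuclideanSpace ℝ (Fin n)) = 0)
    (β : ℝ) (hβ : 0 < β)
    (hΩcompact : IsCompact {y : EuclideanSpace ℝ (Fin n) | V y ≤ β})
    (hVpos : ∀ y : EuclideanSpace ℝ (Fin n), V y ≤ β → y ≠ 0 → 0 < V y)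
    (hdec : ∀ y : EuclideanSpace ℝ (Fin n), V y ≤ β → y ≠ 0 → fderiv ℝ V y (f y) < 0)
    (x : ℝ → EuclideanSpace ℝ (Fin n))
    (hx : ∀ t : ℝ, 0 ≤ t → HasDerivAt x (f (x t)) t)
    (hx0 : V (x 0) ≤ β) :
    Filter.Tendsto x Filter.atTop (nhds (0 : EuclideanSpace ℝ (Fin n))) := by
  have hVd : Differentiable ℝ V := hV.differentiable one_ne_zero
  have hW : Continuous (orbitalDerivative V f) := (hV.continuous_fderiv one_ne_zero).clm_apply hf
  have hne_zero : ∀ {y c}, 0 < c → c ≤ V y → y ≠ 0 := fun hc hy h => by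
    rw [h, hV0] at hy; linarith
  have hnonneg : ∀ y, V y ≤ β → 0 ≤ V y := fun y hy => by
    rcases eq_or_ne y 0 with rfl | hy0
    exacts [hV0.ge, (hVpos y hy hy0).le]
  have hmin : IsLocalMin V 0 :=
    isLocalMin_of_le_on_sublevel hV.continuous.continuousAt (hV0 ▸ hβ) (hV0 ▸ hnonneg)
  have hinv := comp_le_of_orbitalDerivative_neg_on_level hVd hx hx0
    fun y hy => hdec y hy.le (hne_zero hβ hy.ge)
  have hanti := antitoneOn_comp_of_orbitalDerivative_nonpos hVd hx fun t ht => by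
    rcases eq_or_ne (x t) 0 with h | h
    exacts [(h ▸ orbitalDerivative_eq_zero_of_isLocalMin hmin).le, (hdec _ (hinv t ht) h).le]
  have hVx : Tendsto (V ∘ x) atTop (𝓝 (V 0)) := hV0 ▸
    tendsto_of_antitoneOn_of_exists_lt hanti (fun t ht => hnonneg _ (hinv t ht)) fun m hm =>
      exists_comp_lt_of_orbitalDerivative_neg_on_shell hVd hx hW hΩcompact hinv
        fun y hy hmy => hdec y hy (hne_zero hm hmy)
  refine hΩcompact.tendsto_of_tendsto_comp hV.continuous (eventually_atTop.2 ⟨0, hinv⟩)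
    (fun y hy hVy => ?_) hVx
  by_contra h
  exact (hVpos y hy h).ne' (hVy.trans hV0)

/-- Lyapunov sublevel-set theorem for region-of-attraction estimation:
a compact sublevel set `Ω = {y | V y ≤ β}` of a Lyapunov function `V`
(positive definite on `Ω`, strictly decreasing along the flow of `f` on
`Ω \ {0}`) is contained in the region of attraction of the equilibrium `0`:
every trajectory starting in `Ω` converges to `0`. -/
theorem compact_sublevel_subset_region_of_attraction
    (n : ℕ) (hn : 0 < n)
    (f : EuclideanSpace ℝ (Fin n) → EuclideanSpace ℝ (Fin n)) (hf : Continuous f)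
    (hf0 : f (0 : EuclideanSpace ℝ (Fin n)) = 0)
    (V : EuclideanSpace ℝ (Fin n) → ℝ) (hV : ContDiff ℝ 1 V)
    (hV0 : V (0 : EuclideanSpace ℝ (Fin n)) = 0)
    (β : ℝ) (hβ : 0 < β)
    (hΩcompact : IsCompact {y : EuclideanSpace ℝ (Fin n) | V y ≤ β})
    (hVpos : ∀ y : EuclideanSpace ℝ (Fin n), V y ≤ β → y ≠ 0 → 0 < V y)
    (hdec : ∀ y : EuclideanSpace ℝ (Fin n), V y ≤ β → y ≠ 0 → fderiv ℝ V y (f y) < 0)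
    (x : ℝ → EuclideanSpace ℝ (Fin n))
    (hx : ∀ t : ℝ, 0 ≤ t → HasDerivAt x (f (x t)) t)
    (hx0 : V (x 0) ≤ β) :
    Filter.Tendsto x Filter.atTop (nhds (0 : EuclideanSpace ℝ (Fin n))) :=
  compact_sublevel_subset_region_of_attraction_general n f hf V hV hV0 β hβ hΩcompact hVpos hdec x
    hx hx0
end

section
/- Let n be a positive integer, let E = EuclideanSpace ℝ (Fin n), let f : E → E be continuous with f(0) = 0, let V : E → ℝ be continuously differentiable with V(0) = 0, and let h : E → ℝ. Let β > 0, suppose Ω = {y ∈ E | V(y) ≤ β} is compact, V(y) > 0 and (fderiv ℝ V y)(f y) < 0 for every y ∈ Ω with y ≠ 0, and h(y) ≥ 0 for every y ∈ Ω. Then for every x : ℝ → E satisfying HasDerivAt x (f (x t)) t for all t ≥ 0 with V(x 0) ≤ β, one has h(x t) ≥ 0 for all t ≥ 0 and x(t) → 0 as t → ∞. In other words, Ω is contained in the constrained stability region of the equilibrium 0 subject to the inequality constraint h ≥ 0. -/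
open Filter Topology Set

/-!
Along a trajectory, `t ↦ V (x t)` has derivative `lieDeriv V f (x t)`, which is negative on the
level `V = β`; so the trajectory never crosses that level, stays in `Ω = {V ≤ β}` (hence is
feasible), and `V (x t)` is nonincreasing. If `V (x t)` stayed at least `m > 0`, the trajectory
would remain in the compact set `Ω ∩ {m ≤ V}`, where `lieDeriv V f ≤ -δ < 0`, and `V (x t)` would
decrease without bound. Hence `V (x t) → 0`, and as `V` is positive on the compact set `Ω` away
from `0`, this forces `x t → 0`.
-/

section OneDim

variable {W W' : ℝ → ℝ}

theorem le_of_hasDerivAt_neg_on_level {β : ℝ} (hW : ∀ t, 0 ≤ t → HasDerivAt W (W' t) t)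
    (hW0 : W 0 ≤ β) (hlevel : ∀ t, 0 ≤ t → W t = β → W' t < 0) {t : ℝ} (ht : 0 ≤ t) :
    W t ≤ β :=
  image_le_of_deriv_right_lt_deriv_boundary (a := 0) (b := t) (B := fun _ => β) (B' := 0)
    (fun s hs => (hW s hs.1).continuousAt.continuousWithinAt)
    (fun s hs => (hW s hs.1).hasDerivWithinAt) hW0 (fun _ => hasDerivAt_const _ _)
    (fun s hs => hlevel s hs.1) ⟨ht, le_rfl⟩

theorem le_sub_mul_of_hasDerivAt_le_s3 {δ : ℝ} (hW : ∀ t, 0 ≤ t → HasDerivAt W (W' t) t)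
    (hle : ∀ t, 0 ≤ t → W' t ≤ -δ) {t : ℝ} (ht : 0 ≤ t) : W t ≤ W 0 - δ * t := by
  refine image_le_of_deriv_right_le_deriv_boundary (a := 0) (b := t)
    (B := fun s => W 0 - δ * s) (B' := fun _ => -δ)
    (fun s hs => (hW s hs.1).continuousAt.continuousWithinAt)
    (fun s hs => (hW s hs.1).hasDerivWithinAt) (by simp) (by fun_prop) ?_
    (fun s hs => hle s hs.1) ⟨ht, le_rfl⟩
  intro s _
  simpa using ((hasDerivAt_id s).const_mul δ).const_sub (W 0) |>.hasDerivWithinAt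

theorem antitoneOn_of_hasDerivAt_nonpos (hW : ∀ t, 0 ≤ t → HasDerivAt W (W' t) t)
    (hle : ∀ t, 0 ≤ t → W' t ≤ 0) : AntitoneOn W (Ici 0) :=
  antitoneOn_of_hasDerivWithinAt_nonpos (convex_Ici 0)
    (fun t ht => (hW t ht).continuousAt.continuousWithinAt)
    (fun t ht => (hW t (interior_subset ht)).hasDerivWithinAt)
    (fun t ht => hle t (interior_subset ht))

end OneDim

theorem tendsto_nhds_of_tendsto_comp_of_isCompact {X α : Type*} [TopologicalSpace X]
    {V : X → ℝ} {K : Set X} {a : X} (hK : IsCompact K) (hV : ContinuousOn V K)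
    (hpos : ∀ y ∈ K, y ≠ a → 0 < V y) {l : Filter α} {u : α → X} (hu : ∀ᶠ s in l, u s ∈ K)
    (hVu : Tendsto (V ∘ u) l (𝓝 0)) : Tendsto u l (𝓝 a) := by
  refine (nhds_basis_opens a).tendsto_right_iff.2 fun U ⟨haU, hU⟩ => ?_
  obtain ⟨m, hm, hVm⟩ := (hK.diff hU).exists_forall_le' (hV.mono sdiff_subset)
    fun y hy => hpos y hy.1 fun hya => hy.2 (hya ▸ haU)
  filter_upwards [hu, hVu.eventually (gt_mem_nhds hm)] with s hsK hsm
  by_contra hsU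
  exact (hVm (u s) ⟨hsK, hsU⟩).not_gt hsm

section Lyapunov

variable {E : Type*} [NormedAddCommGroup E] [NormedSpace ℝ E]

noncomputable def lieDeriv (V : E → ℝ) (f : E → E) (y : E) : ℝ :=
  fderiv ℝ V y (f y)

variable {f : E → E} {V : E → ℝ} {x : ℝ → E}

theorem hasDerivAt_comp_lieDeriv {t : ℝ} (hV : DifferentiableAt ℝ V (x t))
    (hx : HasDerivAt x (f (x t)) t) : HasDerivAt (V ∘ x) (lieDeriv V f (x t)) t :=
  hV.hasFDerivAt.comp_hasDerivAt t hx

theorem continuous_lieDeriv (hV : ContDiff ℝ 1 V) (hf : Continuous f) :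
    Continuous (lieDeriv V f) :=
  (hV.continuous_fderiv one_ne_zero).clm_apply hf

theorem exists_notMem_of_lieDeriv_neg {K : Set E} (hK : IsCompact K) (hV : ContDiff ℝ 1 V)
    (hf : Continuous f) (hneg : ∀ y ∈ K, lieDeriv V f y < 0)
    (hx : ∀ t, 0 ≤ t → HasDerivAt x (f (x t)) t) : ∃ t, 0 ≤ t ∧ x t ∉ K := by
  by_contra! hstay
  obtain ⟨δ, hδ, hδK⟩ := hK.exists_forall_le' (continuous_lieDeriv hV hf).neg.continuousOn
    fun y hy => neg_pos.2 (hneg y hy)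
  obtain ⟨c, hc⟩ := hK.bddBelow_image hV.continuous.continuousOn
  have hdecay : ∀ t, 0 ≤ t → V (x t) ≤ V (x 0) - δ * t := fun t ht =>
    le_sub_mul_of_hasDerivAt_le_s3 (W := V ∘ x)
      (fun s hs => hasDerivAt_comp_lieDeriv (hV.differentiable one_ne_zero _) (hx s hs))
      (fun s hs => le_neg.1 (hδK _ (hstay s hs))) ht
  have hT : 0 ≤ (V (x 0) - c + 1) / δ := by
    have := hc (mem_image_of_mem V (hstay 0 le_rfl))
    positivity
  have := hc (mem_image_of_mem V (hstay _ hT))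
  have := hdecay _ hT
  rw [mul_div_cancel₀ _ hδ.ne'] at this
  linarith

end Lyapunov

theorem sublevel_subset_constrained_stability_region_general
    (n : ℕ)
    (f : EuclideanSpace ℝ (Fin n) → EuclideanSpace ℝ (Fin n)) (hf : Continuous f)
    (hf0 : f (0 : EuclideanSpace ℝ (Fin n)) = 0)
    (V : EuclideanSpace ℝ (Fin n) → ℝ) (hV : ContDiff ℝ 1 V)
    (hV0 : V (0 : EuclideanSpace ℝ (Fin n)) = 0)
    (h : EuclideanSpace ℝ (Fin n) → ℝ)
    (β : ℝ) (hβ : 0 < β)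
    (hΩcompact : IsCompact {y : EuclideanSpace ℝ (Fin n) | V y ≤ β})
    (hVpos : ∀ y : EuclideanSpace ℝ (Fin n), V y ≤ β → y ≠ 0 → 0 < V y)
    (hdec : ∀ y : EuclideanSpace ℝ (Fin n), V y ≤ β → y ≠ 0 → fderiv ℝ V y (f y) < 0)
    (hfeas : ∀ y : EuclideanSpace ℝ (Fin n), V y ≤ β → 0 ≤ h y)
    (x : ℝ → EuclideanSpace ℝ (Fin n))
    (hx : ∀ t : ℝ, 0 ≤ t → HasDerivAt x (f (x t)) t)
    (hx0 : V (x 0) ≤ β) :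
    (∀ t : ℝ, 0 ≤ t → 0 ≤ h (x t)) ∧
      Filter.Tendsto x Filter.atTop (nhds (0 : EuclideanSpace ℝ (Fin n))) := by
  have hne_zero : ∀ {y} {m : ℝ}, 0 < m → m ≤ V y → y ≠ 0 := fun hm hy hy0 => by
    rw [hy0, hV0] at hy; linarith
  have hW t (ht : 0 ≤ t) : HasDerivAt (V ∘ x) (lieDeriv V f (x t)) t :=
    hasDerivAt_comp_lieDeriv (hV.differentiable one_ne_zero _) (hx t ht)
  have hΩ t (ht : 0 ≤ t) : V (x t) ≤ β :=
    le_of_hasDerivAt_neg_on_level hW hx0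
      (fun s _ hs => hdec _ hs.le (hne_zero hβ hs.ge)) ht
  have hanti : AntitoneOn (V ∘ x) (Ici 0) := by
    refine antitoneOn_of_hasDerivAt_nonpos hW fun t ht => ?_
    by_cases hxt : x t = 0
    · simp [lieDeriv, hxt, hf0]
    · exact (hdec _ (hΩ t ht) hxt).le
  have hsmall m (hm : 0 < m) : ∀ᶠ t in atTop, V (x t) < m := by
    obtain ⟨t₀, ht₀, hexit⟩ := exists_notMem_of_lieDeriv_neg
      (hΩcompact.inter_right (isClosed_le continuous_const hV.continuous)) hV hf
      (fun y hy => hdec y hy.1 (hne_zero hm hy.2)) hx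
    have hlt : V (x t₀) < m := by simpa [hΩ t₀ ht₀] using hexit
    filter_upwards [eventually_ge_atTop t₀] with t ht
    exact (hanti ht₀ (ht₀.trans ht) ht).trans_lt hlt
  have hnonneg : ∀ᶠ t in atTop, 0 ≤ V (x t) := by
    filter_upwards [eventually_ge_atTop 0] with t ht
    by_cases hxt : x t = 0
    · rw [hxt, hV0]
    · exact (hVpos _ (hΩ t ht) hxt).le
  refine ⟨fun t ht => hfeas _ (hΩ t ht), ?_⟩
  refine tendsto_nhds_of_tendsto_comp_of_isCompact hΩcompact hV.continuous.continuousOn hVpos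
    ((eventually_ge_atTop 0).mono hΩ) ?_
  exact tendsto_order.2 ⟨fun a ha => hnonneg.mono fun t ht => ha.trans_le ht, hsmall⟩

/-- Constrained stability region estimate: a compact sublevel set
`Ω = {y | V y ≤ β}` of a Lyapunov function on which the inequality constraint
`h ≥ 0` holds is contained in the constrained stability region of the
equilibrium `0`: trajectories starting in `Ω` remain feasible (`h (x t) ≥ 0`)
for all `t ≥ 0` and converge to `0`. -/
theorem sublevel_subset_constrained_stability_region
    (n : ℕ) (hn : 0 < n)
    (f : EuclideanSpace ℝ (Fin n) → EuclideanSpace ℝ (Fin n)) (hf : Continuous f)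
    (hf0 : f (0 : EuclideanSpace ℝ (Fin n)) = 0)
    (V : EuclideanSpace ℝ (Fin n) → ℝ) (hV : ContDiff ℝ 1 V)
    (hV0 : V (0 : EuclideanSpace ℝ (Fin n)) = 0)
    (h : EuclideanSpace ℝ (Fin n) → ℝ)
    (β : ℝ) (hβ : 0 < β)
    (hΩcompact : IsCompact {y : EuclideanSpace ℝ (Fin n) | V y ≤ β})
    (hVpos : ∀ y : EuclideanSpace ℝ (Fin n), V y ≤ β → y ≠ 0 → 0 < V y)
    (hdec : ∀ y : EuclideanSpace ℝ (Fin n), V y ≤ β → y ≠ 0 → fderiv ℝ V y (f y) < 0)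
    (hfeas : ∀ y : EuclideanSpace ℝ (Fin n), V y ≤ β → 0 ≤ h y)
    (x : ℝ → EuclideanSpace ℝ (Fin n))
    (hx : ∀ t : ℝ, 0 ≤ t → HasDerivAt x (f (x t)) t)
    (hx0 : V (x 0) ≤ β) :
    (∀ t : ℝ, 0 ≤ t → 0 ≤ h (x t)) ∧
      Filter.Tendsto x Filter.atTop (nhds (0 : EuclideanSpace ℝ (Fin n))) :=
  sublevel_subset_constrained_stability_region_general n f hf hf0 V hV hV0 h β hβ hΩcompact hVpos
    hdec hfeas x hx hx0
end
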